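/- Let N ≥ 1 be an integer, 0 < ε < π/2, and let α, β ∈ ℝ satisfy α > 0 and α + β > 0. Then there exists a constant C > 0, depending only on α, β, ε and N, such that for every λ ∈ Σ_ε and every ξ ∈ ℝ^N the operator norm on ℂ^N of the inverse matrix ((λ + α|ξ|²) I_N + β ξ ξ^⊤)^{−1} is at most C(|λ|^{1/2} + |ξ|)^{−2}. -/

import Mathlib

set_option maxHeartbeats 1000000

open Real

private lemma coef_zero (a b c : ℂ) (ha : a ≠ 0) (hb : a + c * b ≠ 0) :
    a * (-c / (a * (a + c * b))) + c * a⁻¹ + c * (-c / (a * (a + c * b))) * b = 0 := by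
  field_simp
  ring

/-- Sector estimate: for `l` in the sector and `t ≥ 0`,
`sin(ε/2) * (|l| + t) ≤ |l + t|`. -/
lemma sector_lower_bound (ε : ℝ) (hε0 : 0 < ε) (hε1 : ε < Real.pi / 2)
    (l : ℂ) (harg : |Complex.arg l| ≤ Real.pi - ε) (t : ℝ) (ht : 0 ≤ t) :
    Real.sin (ε / 2) * (‖l‖ + t) ≤ ‖l + (t : ℂ)‖ := by
  have hπ := Real.pi_pos
  have hεπ : ε < Real.pi := by linarith
  -- cos of arg bound
  have hargmem : Complex.arg l ∈ Set.Icc (-(Real.pi - ε)) (Real.pi - ε) := by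
    constructor <;> [linarith [neg_abs_le (Complex.arg l)]; linarith [le_abs_self (Complex.arg l)]]
  have hcos : -Real.cos ε ≤ Real.cos (Complex.arg l) := by
    rw [← Real.cos_abs l.arg, ← Real.cos_pi_sub]
    exact Real.cos_le_cos_of_nonneg_of_le_pi (abs_nonneg _) (by linarith) harg
  have hre : ‖l‖ * Real.cos (Complex.arg l) = l.re := Complex.norm_mul_cos_arg l
  have hre' : -(‖l‖ * Real.cos ε) ≤ l.re := by
    rw [← hre]
    have := mul_le_mul_of_nonneg_left hcos (norm_nonneg l)
    linarith
  -- sin(ε/2)^2 = (1 - cos ε)/2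
  have hsq : Real.sin (ε / 2) ^ 2 = (1 - Real.cos ε) / 2 := by
    have h2 : (2 : ℝ) * (ε / 2) = ε := by ring
    have h1 := Real.sin_sq (ε / 2)
    have h3 := Real.cos_sq (ε / 2)
    rw [h2] at h3
    rw [h3] at h1
    rw [h1]; ring
  have hcosle : Real.cos ε ≤ 1 := Real.cos_le_one ε
  have hcospos : 0 < Real.cos ε := Real.cos_pos_of_mem_Ioo ⟨by linarith, hε1⟩
  have hsinpos : 0 ≤ Real.sin (ε / 2) :=
    Real.sin_nonneg_of_nonneg_of_le_pi (by linarith) (by linarith)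
  -- squared inequality
  have habs : ‖l + (t : ℂ)‖ ^ 2 = ‖l‖ ^ 2 + 2 * t * l.re + t ^ 2 := by
    rw [Complex.sq_norm, Complex.sq_norm]
    simp [Complex.normSq_apply, Complex.add_re, Complex.add_im, Complex.ofReal_re,
      Complex.ofReal_im]
    ring
  have hsqle : (Real.sin (ε / 2) * (‖l‖ + t)) ^ 2
      ≤ ‖l + (t : ℂ)‖ ^ 2 := by
    rw [habs, mul_pow, hsq]
    have hA : 0 ≤ ‖l‖ := norm_nonneg l
    nlinarith [sq_nonneg (‖l‖ - t), mul_nonneg (mul_nonneg hA ht) hcospos.le,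
      mul_le_mul_of_nonneg_left hre' (mul_nonneg (by norm_num : (0:ℝ) ≤ 2) ht)]
  have h1 : 0 ≤ Real.sin (ε / 2) * (‖l‖ + t) :=
    mul_nonneg hsinpos (by positivity)
  nlinarith [norm_nonneg (l + (t : ℂ)), hsqle, h1]

/-- operator-norm bound `‖((λ+α|ξ|²)I + βξξᵀ)⁻¹‖ ≤ C(|λ|^{1/2}+|ξ|)^{-2}`
on the sector, stated via the action on vectors of `ℂ^N` with the Euclidean norm. -/
theorem lame_symbol_inverse_operator_norm_bound
    (N : ℕ) (hN : 1 ≤ N) (ε α β : ℝ)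
    (hε0 : 0 < ε) (hε1 : ε < Real.pi / 2) (hα : 0 < α) (hαβ : 0 < α + β) :
    ∃ C : ℝ, 0 < C ∧
      ∀ l : ℂ, l ≠ 0 → |Complex.arg l| ≤ Real.pi - ε →
        ∀ ξ : EuclideanSpace ℝ (Fin N), ∀ x : EuclideanSpace ℂ (Fin N),
          ‖Matrix.toEuclideanLin
              (((l + (α : ℂ) * (‖ξ‖ : ℂ) ^ 2) • (1 : Matrix (Fin N) (Fin N) ℂ) +
                  (β : ℂ) • Matrix.of fun j k => (ξ j : ℂ) * (ξ k : ℂ))⁻¹) x‖ ≤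
            C * ((Real.sqrt (‖l‖) + ‖ξ‖) ^ 2)⁻¹ * ‖x‖ := by
  have hπ := Real.pi_pos
  set κ : ℝ := Real.sin (ε / 2) with hκdef
  have hκ : 0 < κ := Real.sin_pos_of_pos_of_lt_pi (by linarith) (by linarith)
  set c₁ : ℝ := κ * min α 1 with hc₁def
  set c₂ : ℝ := κ * min (α + β) 1 with hc₂def
  have hc₁ : 0 < c₁ := mul_pos hκ (lt_min hα one_pos)
  have hc₂ : 0 < c₂ := mul_pos hκ (lt_min hαβ one_pos)
  refine ⟨2 * (1 / c₁ + |β| / (c₁ * c₂)), by positivity, ?_⟩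
  intro l hl harg ξ x
  set s : ℝ := ‖ξ‖ ^ 2 with hsdef
  have hs : 0 ≤ s := sq_nonneg _
  set a : ℂ := l + ((α * s : ℝ) : ℂ) with hadef
  have hlabs : 0 < ‖l‖ := norm_pos_iff.mpr hl
  set m : ℝ := ‖l‖ + s with hmdef
  have hm : 0 < m := by positivity
  -- lower bounds
  have ha1 : κ * (‖l‖ + α * s) ≤ ‖a‖ :=
    sector_lower_bound ε hε0 hε1 l harg (α * s) (by positivity)
  have ha2 : κ * (‖l‖ + (α + β) * s) ≤ ‖a + ((β * s : ℝ) : ℂ)‖ := by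
    have : a + ((β * s : ℝ) : ℂ) = l + (((α + β) * s : ℝ) : ℂ) := by
      rw [hadef]; push_cast; ring
    rw [this]
    exact sector_lower_bound ε hε0 hε1 l harg ((α + β) * s)
      (mul_nonneg hαβ.le hs)
  have ha1' : c₁ * m ≤ ‖a‖ := by
    refine le_trans ?_ ha1
    rw [hc₁def, hmdef, mul_assoc]
    refine mul_le_mul_of_nonneg_left ?_ hκ.le
    have h1 : min α 1 ≤ 1 := min_le_right _ _
    have h2 : min α 1 ≤ α := min_le_left _ _
    have h3 : 0 < min α 1 := lt_min hα one_pos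
    nlinarith
  have ha2' : c₂ * m ≤ ‖a + ((β * s : ℝ) : ℂ)‖ := by
    refine le_trans ?_ ha2
    rw [hc₂def, hmdef, mul_assoc]
    refine mul_le_mul_of_nonneg_left ?_ hκ.le
    have h1 : min (α + β) 1 ≤ 1 := min_le_right _ _
    have h2 : min (α + β) 1 ≤ α + β := min_le_left _ _
    have h3 : 0 < min (α + β) 1 := lt_min hαβ one_pos
    nlinarith
  have hA : 0 < ‖a‖ := lt_of_lt_of_le (by positivity) ha1'
  have hB : 0 < ‖a + ((β * s : ℝ) : ℂ)‖ := lt_of_lt_of_le (by positivity) ha2'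
  have ha0 : a ≠ 0 := by
    intro h; rw [h] at hA; simp at hA
  have hab0 : a + ((β * s : ℝ) : ℂ) ≠ 0 := by
    intro h; rw [h] at hB; simp at hB
  -- matrix setup
  set P : Matrix (Fin N) (Fin N) ℂ := Matrix.of fun j k => (ξ j : ℂ) * (ξ k : ℂ) with hPdef
  have hsum : ∑ i, (ξ i : ℂ) * (ξ i : ℂ) = ((s : ℝ) : ℂ) := by
    have hreal : s = ∑ i, (ξ i) ^ 2 := by
      rw [hsdef, EuclideanSpace.norm_eq, Real.sq_sqrt (by positivity)]
      simp [Real.norm_eq_abs, sq_abs]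
    rw [hreal]
    push_cast
    congr 1
    funext i
    ring
  have hP2 : P * P = ((s : ℝ) : ℂ) • P := by
    ext j k
    simp only [Matrix.mul_apply, hPdef, Matrix.of_apply, Matrix.smul_apply, smul_eq_mul]
    rw [← hsum, Finset.sum_mul]
    congr 1; funext i; ring
  set d : ℂ := -(β : ℂ) / (a * (a + ((β * s : ℝ) : ℂ))) with hddef
  -- the inverse formula
  have hinv : (a • (1 : Matrix (Fin N) (Fin N) ℂ) + (β : ℂ) • P)⁻¹
      = a⁻¹ • (1 : Matrix (Fin N) (Fin N) ℂ) + d • P := by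
    apply Matrix.inv_eq_right_inv
    have expand : (a • (1 : Matrix (Fin N) (Fin N) ℂ) + (β : ℂ) • P) *
        (a⁻¹ • 1 + d • P)
        = (a * a⁻¹) • (1 : Matrix (Fin N) (Fin N) ℂ)
          + (a * d + (β : ℂ) * a⁻¹ + (β : ℂ) * d * ((s : ℝ) : ℂ)) • P := by
      rw [add_mul, mul_add, mul_add]
      simp only [Matrix.smul_mul, Matrix.mul_smul, one_mul, mul_one, hP2, smul_smul]
      module
    rw [expand, mul_inv_cancel₀ ha0]
    have hcast : ((β * s : ℝ) : ℂ) = (β : ℂ) * ((s : ℝ) : ℂ) := by push_cast; ring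
    have hcoef : a * d + (β : ℂ) * a⁻¹ + (β : ℂ) * d * ((s : ℝ) : ℂ) = 0 := by
      rw [hddef, hcast]
      exact coef_zero a ((s : ℝ) : ℂ) (β : ℂ) ha0 (by rwa [hcast] at hab0)
    rw [hcoef]
    simp
  -- rewrite the matrix in the goal
  have hgoalmat : ((l + (α : ℂ) * (‖ξ‖ : ℂ) ^ 2) • (1 : Matrix (Fin N) (Fin N) ℂ) +
      (β : ℂ) • Matrix.of fun j k => (ξ j : ℂ) * (ξ k : ℂ))
      = a • (1 : Matrix (Fin N) (Fin N) ℂ) + (β : ℂ) • P := by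
    rw [hPdef, hadef, hsdef]
    push_cast
    ring_nf
  rw [hgoalmat, hinv]
  -- the complex vector ξ
  set ξc : EuclideanSpace ℂ (Fin N) := (WithLp.equiv 2 (Fin N → ℂ)).symm
    (fun j => (ξ j : ℂ)) with hξcdef
  have hξc_apply : ∀ j, ξc j = (ξ j : ℂ) := fun j => rfl
  have hξcnorm : ‖ξc‖ = ‖ξ‖ := by
    rw [EuclideanSpace.norm_eq, EuclideanSpace.norm_eq]
    congr 1
    apply Finset.sum_congr rfl
    intro i _
    rw [hξc_apply, Complex.norm_real]
  set t : ℂ := ∑ k, (ξ k : ℂ) * x k with htdef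
  have hPx : Matrix.toEuclideanLin P x = t • ξc := by
    apply (WithLp.equiv 2 (Fin N → ℂ)).injective
    funext j
    simp only [Matrix.toEuclideanLin_apply]
    show (P.mulVec ((WithLp.equiv 2 (Fin N → ℂ)) x)) j = ((t • ξc : EuclideanSpace ℂ (Fin N)) : Fin N → ℂ) j
    simp only [Matrix.mulVec, dotProduct, hPdef, Matrix.of_apply,
      PiLp.smul_apply, smul_eq_mul, htdef, hξc_apply]
    rw [Finset.sum_mul]
    congr 1; funext k
    rw [WithLp.equiv_apply]
    ring
  have happly : Matrix.toEuclideanLin (a⁻¹ • (1 : Matrix (Fin N) (Fin N) ℂ) + d • P) x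
      = a⁻¹ • x + d • (t • ξc) := by
    rw [map_add, map_smul, map_smul]
    rw [LinearMap.add_apply, LinearMap.smul_apply, LinearMap.smul_apply, hPx]
    congr 1
    have : Matrix.toEuclideanLin (1 : Matrix (Fin N) (Fin N) ℂ) x = x := by
      apply (WithLp.equiv 2 (Fin N → ℂ)).injective
      simp [Matrix.toEuclideanLin_apply]
    rw [this]
  rw [happly]
  -- Cauchy–Schwarz
  have hinner : t = inner ℂ ξc x := by
    rw [PiLp.inner_apply]
    apply Finset.sum_congr rfl
    intro k _
    rw [RCLike.inner_apply, hξc_apply, Complex.conj_ofReal, mul_comm]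
  have ht : ‖t‖ ≤ ‖ξ‖ * ‖x‖ := by
    rw [hinner, ← hξcnorm]
    exact norm_inner_le_norm ξc x
  -- norm bound
  have hnorm : ‖a⁻¹ • x + d • (t • ξc)‖
      ≤ (‖a‖)⁻¹ * ‖x‖ + ‖d‖ * (‖ξ‖ * ‖x‖ * ‖ξ‖) := by
    refine le_trans (norm_add_le _ _) ?_
    gcongr
    · rw [norm_smul, norm_inv]
    · rw [norm_smul, norm_smul, hξcnorm]
      refine mul_le_mul_of_nonneg_left ?_ (norm_nonneg d)
      exact mul_le_mul_of_nonneg_right ht (norm_nonneg ξ)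
  refine le_trans hnorm ?_
  -- arithmetic finish
  have hd : ‖d‖ = |β| / (‖a‖ * ‖a + ((β * s : ℝ) : ℂ)‖) := by
    rw [hddef, norm_div, norm_mul, norm_neg, Complex.norm_real, Real.norm_eq_abs]
  have hsm : s ≤ m := by rw [hmdef]; linarith
  have hstep1 : (‖a‖)⁻¹ ≤ (c₁ * m)⁻¹ :=
    inv_anti₀ (by positivity) ha1'
  have hstep2 : ‖d‖ ≤ |β| / ((c₁ * m) * (c₂ * m)) := by
    rw [hd]
    apply div_le_div_of_nonneg_left (abs_nonneg β) (by positivity)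
    exact mul_le_mul ha1' ha2' (by positivity) (norm_nonneg a)
  have hsq2 : (Real.sqrt (‖l‖) + ‖ξ‖) ^ 2 ≤ 2 * m := by
    rw [hmdef, hsdef]
    have h1 : Real.sqrt (‖l‖) ^ 2 = ‖l‖ :=
      Real.sq_sqrt hlabs.le
    nlinarith [sq_nonneg (Real.sqrt (‖l‖) - ‖ξ‖), Real.sqrt_nonneg (‖l‖),
      norm_nonneg ξ]
  have hsqpos : 0 < (Real.sqrt (‖l‖) + ‖ξ‖) ^ 2 := by
    have : 0 < Real.sqrt (‖l‖) := Real.sqrt_pos.mpr hlabs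
    positivity
  have hkey : (‖a‖)⁻¹ * ‖x‖ + ‖d‖ * (‖ξ‖ * ‖x‖ * ‖ξ‖)
      ≤ ((c₁ * m)⁻¹ + |β| / ((c₁ * m) * (c₂ * m)) * s) * ‖x‖ := by
    have hξξ : ‖ξ‖ * ‖x‖ * ‖ξ‖ = s * ‖x‖ := by rw [hsdef]; ring
    rw [hξξ]
    have := mul_le_mul_of_nonneg_right hstep2 (mul_nonneg hs (norm_nonneg x))
    have h2 := mul_le_mul_of_nonneg_right hstep1 (norm_nonneg x)
    calc (‖a‖)⁻¹ * ‖x‖ + ‖d‖ * (s * ‖x‖)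
        ≤ (c₁ * m)⁻¹ * ‖x‖ + |β| / ((c₁ * m) * (c₂ * m)) * (s * ‖x‖) := by linarith
      _ = ((c₁ * m)⁻¹ + |β| / ((c₁ * m) * (c₂ * m)) * s) * ‖x‖ := by ring
  refine le_trans hkey ?_
  refine mul_le_mul_of_nonneg_right ?_ (norm_nonneg x)
  -- (c₁m)⁻¹ + |β|/((c₁m)(c₂m)) * s ≤ C * ((√|l|+‖ξ‖)²)⁻¹
  have hmid : (c₁ * m)⁻¹ + |β| / ((c₁ * m) * (c₂ * m)) * s
      ≤ (1 / c₁ + |β| / (c₁ * c₂)) * m⁻¹ := by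
    have h1 : |β| / ((c₁ * m) * (c₂ * m)) * s ≤ |β| / ((c₁ * m) * (c₂ * m)) * m :=
      mul_le_mul_of_nonneg_left hsm (by positivity)
    have h2 : |β| / ((c₁ * m) * (c₂ * m)) * m = |β| / (c₁ * c₂) * m⁻¹ := by
      field_simp
    have h3 : (c₁ * m)⁻¹ = (1 / c₁) * m⁻¹ := by
      field_simp
    rw [h3]
    calc (1 / c₁) * m⁻¹ + |β| / ((c₁ * m) * (c₂ * m)) * s
        ≤ (1 / c₁) * m⁻¹ + |β| / (c₁ * c₂) * m⁻¹ := by rw [← h2]; linarith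
      _ = (1 / c₁ + |β| / (c₁ * c₂)) * m⁻¹ := by ring
  refine le_trans hmid ?_
  have hfin : m⁻¹ ≤ 2 * ((Real.sqrt (‖l‖) + ‖ξ‖) ^ 2)⁻¹ := by
    have h := inv_anti₀ hsqpos hsq2
    have h2 : m⁻¹ = 2 * (2 * m)⁻¹ := by field_simp
    rw [h2]
    exact mul_le_mul_of_nonneg_left h (by norm_num)
  calc (1 / c₁ + |β| / (c₁ * c₂)) * m⁻¹
      ≤ (1 / c₁ + |β| / (c₁ * c₂)) * (2 * ((Real.sqrt (‖l‖) + ‖ξ‖) ^ 2)⁻¹) :=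
        mul_le_mul_of_nonneg_left hfin (by positivity)
    _ = 2 * (1 / c₁ + |β| / (c₁ * c₂)) * ((Real.sqrt (‖l‖) + ‖ξ‖) ^ 2)⁻¹ := by ring
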